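/- For 0 < μ < L, setting α = 4μ²/L² and q = (1/2)(2 + α − √(α² + 4α)), it holds that ln(q) ≥ −2μ/(L − μ). -/

import Mathlib

/-!
Writing `α = 4 t²` with `t = μ / L`, the root is `q = (√(1 + t²) - t)² = exp (-2 arsinh t)`,
because `(√(1 + t²) - t) (√(1 + t²) + t) = 1` and `exp (arsinh t) = t + √(1 + t²)`.
Hence `log q = -2 arsinh t ≥ -2 t ≥ -2 μ / (L - μ)`, using `arsinh t ≤ t` for `t ≥ 0`.
-/

open Real

lemma Real.arsinh_le_self {x : ℝ} (hx : 0 ≤ x) : arsinh x ≤ x := by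
  rw [← sinh_le_sinh, sinh_arsinh]
  exact self_le_sinh_iff.2 hx

lemma sqrt_sq_add_four_mul_four_mul_sq {t : ℝ} (ht : 0 ≤ t) :
    √((4 * t ^ 2) ^ 2 + 4 * (4 * t ^ 2)) = 4 * t * √(1 + t ^ 2) := by
  rw [← sqrt_sq (by positivity : 0 ≤ 4 * t * √(1 + t ^ 2)), mul_pow (4 * t),
    sq_sqrt (by positivity)]
  ring_nf

lemma smaller_root_mul_exp_arsinh_sq {t : ℝ} (ht : 0 ≤ t) :
    (2 + 4 * t ^ 2 - √((4 * t ^ 2) ^ 2 + 4 * (4 * t ^ 2))) / 2 * exp (arsinh t) ^ 2 = 1 := by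
  have hr : √(1 + t ^ 2) ^ 2 = 1 + t ^ 2 := sq_sqrt (by positivity)
  rw [sqrt_sq_add_four_mul_four_mul_sq ht, exp_arsinh]
  linear_combination (1 - 2 * t ^ 2 - 2 * t * √(1 + t ^ 2)) * hr

lemma log_smaller_root_eq_neg_two_mul_arsinh {t : ℝ} (ht : 0 ≤ t) :
    log ((2 + 4 * t ^ 2 - √((4 * t ^ 2) ^ 2 + 4 * (4 * t ^ 2))) / 2) = -2 * arsinh t := by
  rw [eq_inv_of_mul_eq_one_left (smaller_root_mul_exp_arsinh_sq ht), ← exp_nat_mul, ← exp_neg,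
    log_exp]
  ring

theorem log_q_lower_bound (L μ : ℝ) (hμ : 0 < μ) (hL : μ < L)
    (α q : ℝ) (hα : α = 4 * μ ^ 2 / L ^ 2)
    (hq : q = (2 + α - Real.sqrt (α ^ 2 + 4 * α)) / 2) :
    Real.log q ≥ -2 * μ / (L - μ) := by
  have hL₀ : 0 < L := hμ.trans hL
  have ht : 0 ≤ μ / L := by positivity
  have hαt : α = 4 * (μ / L) ^ 2 := by rw [hα]; ring
  have harsinh : arsinh (μ / L) ≤ μ / (L - μ) :=
    (arsinh_le_self ht).trans (div_le_div_of_nonneg_left hμ.le (sub_pos.2 hL) (by linarith))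
  rw [hq, hαt, log_smaller_root_eq_neg_two_mul_arsinh ht, mul_div_assoc]
  linarith
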